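/- Let (X,Σ) be a stratified sample of ℝ^N with X compact and Σ nonempty, such that the induced strongly stratified sample ε_s(X,Σ) = (X, s_Σ) has cylinder structure, and fix v = (v₁,v₂) ∈ Ω. Then: (i) for every ε > 0 there is δ > 0 such that every stratified sample (X',Σ') with Σ' nonempty, d_H(X,X') < δ and d_H(Σ,Σ') < δ satisfies: each of the three componentwise Hausdorff distances between D_v(ε_s(X,Σ)) and D_v(ε_s(X',Σ')) is at most ε. (ii) If moreover there are K ≥ 0 and ρ > 0 such that d_H(X^a_b, X^{a'}_{b'}) ≤ K·max(|a−a'|, |b−b'|) for all a,a' ∈ (v₁−ρ, v₁+ρ) and b,b' ∈ (v₂−ρ, v₂+ρ) with a ≤ b and a' ≤ b' (interval level sets taken with respect to s_Σ), then there is δ₀ > 0 such that for every 0 < δ ≤ δ₀ and every stratified sample (X',Σ') with Σ' nonempty, d_H(X,X') < δ and d_H(Σ,Σ') < δ, each of the three componentwise Hausdorff distances between D_v(ε_s(X,Σ)) and D_v(ε_s(X',Σ')) is at most 2(K+1)δ. (This is the diagram-level content of the theorem that the persistent stratified homotopy type ε_P^v is continuous, respectively 2(K+1)-Lipschitz, at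 compact cylindrically stratified spaces.) -/

import Mathlib

/-!
If `d_H(X, X') < δ` and `d_H(Σ, Σ') < δ`, the two samples are strongly `2δ`-close: every point
of either one has a partner in the other at distance `≤ 2δ` whose level differs by `≤ 2δ`,
because `s_Σ` is `1`-Lipschitz and `|s_Σ - s_Σ'| ≤ d_H(Σ, Σ')`. Partners of points of `X^a_b`
therefore lie in the level set widened by `2δ`, so every component of the diagram moves by at
most `r + 2δ` as soon as `X^{v₁}_{v₂}` lies within `r` of `X^{v₁+2δ}_{v₂-2δ}` and
`X^{v₁-2δ}_{v₂+2δ}` within `r` of `X^{v₁}_{v₂}` (points of `X_{≤v₂}` or `X_{≥v₁}` outside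
`[v₁, v₂]` need not move). The Lipschitz hypothesis gives `r = 2Kδ`. For continuity, the
cylinder structure shows that all levels near that of a point of `X^{v₁}_{v₂}` are attained
nearby, so `X^{v₁}_{v₂}` lies in the closure of `{v₁ < s_Σ < v₂}`, and compactness of `X` makes
the required `r` tend to `0` with `δ`.
-/

open Metric Set
open scoped ENNReal

namespace Stmt12

variable {N : ℕ}

/-- Sublevel set `X_{≤ b}`. -/
def sub (X : Set (EuclideanSpace ℝ (Fin N))) (s : EuclideanSpace ℝ (Fin N) → ℝ) (b : ℝ) :
    Set (EuclideanSpace ℝ (Fin N)) := {x | x ∈ X ∧ s x ≤ b}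

/-- Superlevel set `X_{≥ a}`. -/
def supl (X : Set (EuclideanSpace ℝ (Fin N))) (s : EuclideanSpace ℝ (Fin N) → ℝ) (a : ℝ) :
    Set (EuclideanSpace ℝ (Fin N)) := {x | x ∈ X ∧ a ≤ s x}

/-- Interval level set `X^a_b`. -/
def ival (X : Set (EuclideanSpace ℝ (Fin N))) (s : EuclideanSpace ℝ (Fin N) → ℝ) (a b : ℝ) :
    Set (EuclideanSpace ℝ (Fin N)) := {x | x ∈ X ∧ a ≤ s x ∧ s x ≤ b}

/-- The parameter space `Ω = {(v₁,v₂) : 0 < v₁ < v₂ < 1}`. -/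
def Omega : Set (ℝ × ℝ) := {p | 0 < p.1 ∧ p.1 < p.2 ∧ p.2 < 1}

/-- The stratification diagram `D_v(X,s) = (X_{≤v₂}, X^{v₁}_{v₂}, X_{≥v₁})`. -/
def Dv (X : Set (EuclideanSpace ℝ (Fin N))) (s : EuclideanSpace ℝ (Fin N) → ℝ) (v : ℝ × ℝ) :
    Set (EuclideanSpace ℝ (Fin N)) × Set (EuclideanSpace ℝ (Fin N)) ×
      Set (EuclideanSpace ℝ (Fin N)) :=
  (sub X s v.2, ival X s v.1 v.2, supl X s v.1)

/-- Maximum of the three componentwise Hausdorff distances between two diagram triples. -/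
noncomputable def diagDist
    (D D' : Set (EuclideanSpace ℝ (Fin N)) × Set (EuclideanSpace ℝ (Fin N)) ×
      Set (EuclideanSpace ℝ (Fin N))) : ℝ≥0∞ :=
  max (EMetric.hausdorffEdist D.1 D'.1)
    (max (EMetric.hausdorffEdist D.2.1 D'.2.1) (EMetric.hausdorffEdist D.2.2 D'.2.2))

/-- Two strongly stratified samples are `δ`-close. -/
def StronglyClose (δ : ℝ) (X X' : Set (EuclideanSpace ℝ (Fin N)))
    (s s' : EuclideanSpace ℝ (Fin N) → ℝ) : Prop :=
  (∀ x ∈ X, ∃ y ∈ X', ‖x - y‖ ≤ δ ∧ |s x - s' y| ≤ δ) ∧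
  (∀ y ∈ X', ∃ x ∈ X, ‖x - y‖ ≤ δ ∧ |s x - s' y| ≤ δ)

/-- The induced strong stratification of a stratified sample `(X, Σ)`:
`s_Σ(x) := min (dist x Σ) 1`. -/
noncomputable def inducedStrat (Sg : Set (EuclideanSpace ℝ (Fin N)))
    (x : EuclideanSpace ℝ (Fin N)) : ℝ :=
  min (Metric.infDist x Sg) 1

/-- A strongly stratified sample `(X,s)` has cylinder structure if, with
`L := s⁻¹({1/2})`, there is a homeomorphism `f : s⁻¹((0,1)) ≃ₜ L × (0,1)` over `(0,1)`. -/
def HasCylinderStructure (X : Set (EuclideanSpace ℝ (Fin N)))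
    (s : EuclideanSpace ℝ (Fin N) → ℝ) : Prop :=
  ∃ f : {x : EuclideanSpace ℝ (Fin N) // x ∈ X ∧ s x ∈ Set.Ioo (0 : ℝ) 1} ≃ₜ
      ({x : EuclideanSpace ℝ (Fin N) // x ∈ X ∧ s x = 1 / 2} × Set.Ioo (0 : ℝ) 1),
    ∀ x, ((f x).2 : ℝ) = s x.1

open Filter Topology

lemma subset_cthickening_of_hausdorffEDist_le {α : Type*} [PseudoMetricSpace α] {A B : Set α}
    {r : ℝ} (h : hausdorffEDist A B ≤ ENNReal.ofReal r) : A ⊆ cthickening r B :=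
  fun _ hx => mem_cthickening_iff.mpr ((infEDist_le_hausdorffEDist_of_mem hx).trans h)

lemma hausdorffEDist_le_of_subset_cthickening {α : Type*} [PseudoMetricSpace α] {A B : Set α}
    {r : ℝ} (hA : A ⊆ cthickening r B) (hB : B ⊆ cthickening r A) :
    hausdorffEDist A B ≤ ENNReal.ofReal r :=
  hausdorffEDist_le_of_infEDist (fun _ hx => mem_cthickening_iff.mp (hA hx))
    (fun _ hx => mem_cthickening_iff.mp (hB hx))

section LevelSets

variable {X X' : Set (EuclideanSpace ℝ (Fin N))} {s s' : EuclideanSpace ℝ (Fin N) → ℝ}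

lemma ival_subset_ival {a b a' b' : ℝ} (ha : a' ≤ a) (hb : b ≤ b') :
    ival X s a b ⊆ ival X s a' b' :=
  fun _ ⟨hx, h₁, h₂⟩ => ⟨hx, ha.trans h₁, h₂.trans hb⟩

lemma sub_subset_cthickening {a b a' b' r : ℝ} (hab' : a ≤ b')
    (h : ival X s a b ⊆ cthickening r (ival X s a' b')) :
    sub X s b ⊆ cthickening r (sub X s b') := by
  rintro x ⟨hx, hxb⟩
  by_cases hxb' : s x ≤ b'
  · exact self_subset_cthickening _ ⟨hx, hxb'⟩
  · refine cthickening_subset_of_subset r 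
      (show ival X s a' b' ⊆ sub X s b' from fun _ hy => ⟨hy.1, hy.2.2⟩) (h ⟨hx, ?_, hxb⟩)
    linarith

lemma supl_subset_cthickening {a b a' b' r : ℝ} (ha'b : a' ≤ b)
    (h : ival X s a b ⊆ cthickening r (ival X s a' b')) :
    supl X s a ⊆ cthickening r (supl X s a') := by
  rintro x ⟨hx, hax⟩
  by_cases hxa' : a' ≤ s x
  · exact self_subset_cthickening _ ⟨hx, hxa'⟩
  · refine cthickening_subset_of_subset r 
      (show ival X s a' b' ⊆ supl X s a' from fun _ hy => ⟨hy.1, hy.2.1⟩) (h ⟨hx, hax, ?_⟩)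
    linarith

lemma StronglyClose.symm {δ : ℝ} (h : StronglyClose δ X X' s s') :
    StronglyClose δ X' X s' s := by
  refine ⟨fun y hy => ?_, fun x hx => ?_⟩
  · obtain ⟨x, hx, hd, hs⟩ := h.2 y hy
    exact ⟨x, hx, by rwa [norm_sub_rev], by rwa [abs_sub_comm]⟩
  · obtain ⟨y, hy, hd, hs⟩ := h.1 x hx
    exact ⟨y, hy, by rwa [norm_sub_rev], by rwa [abs_sub_comm]⟩

lemma StronglyClose.inter_preimage_subset_cthickening {δ : ℝ} {J J' : Set ℝ}
    (h : StronglyClose δ X X' s s') (hJ : ∀ t ∈ J, ∀ t', |t - t'| ≤ δ → t' ∈ J') :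
    X ∩ s ⁻¹' J ⊆ cthickening δ (X' ∩ s' ⁻¹' J') := by
  rintro x ⟨hx, hxJ⟩
  obtain ⟨y, hy, hxy, hs⟩ := h.1 x hx
  exact mem_cthickening_of_dist_le x y δ _ ⟨hy, hJ _ hxJ _ hs⟩ (by rwa [dist_eq_norm])

lemma StronglyClose.hausdorffEDist_inter_preimage_le {τ r : ℝ} {I Iin Iout : Set ℝ}
    (h : StronglyClose τ X X' s s') (hτ : 0 ≤ τ) (hr : 0 ≤ r)
    (hIin : ∀ t ∈ Iin, ∀ t', |t - t'| ≤ τ → t' ∈ I)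
    (hIout : ∀ t ∈ I, ∀ t', |t - t'| ≤ τ → t' ∈ Iout)
    (hin : X ∩ s ⁻¹' I ⊆ cthickening r (X ∩ s ⁻¹' Iin))
    (hout : X ∩ s ⁻¹' Iout ⊆ cthickening r (X ∩ s ⁻¹' I)) :
    hausdorffEDist (X ∩ s ⁻¹' I) (X' ∩ s' ⁻¹' I) ≤ ENNReal.ofReal (r + τ) := by
  apply hausdorffEDist_le_of_subset_cthickening
  · calc X ∩ s ⁻¹' I ⊆ cthickening r (X ∩ s ⁻¹' Iin) := hin
      _ ⊆ cthickening r (cthickening τ (X' ∩ s' ⁻¹' I)) :=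
        cthickening_subset_of_subset r (h.inter_preimage_subset_cthickening hIin)
      _ ⊆ cthickening (r + τ) (X' ∩ s' ⁻¹' I) := cthickening_cthickening_subset hr hτ _
  · calc X' ∩ s' ⁻¹' I ⊆ cthickening τ (X ∩ s ⁻¹' Iout) :=
          h.symm.inter_preimage_subset_cthickening hIout
      _ ⊆ cthickening τ (cthickening r (X ∩ s ⁻¹' I)) := cthickening_subset_of_subset τ hout
      _ ⊆ cthickening (r + τ) (X ∩ s ⁻¹' I) := by
        rw [add_comm]; exact cthickening_cthickening_subset hτ hr _

lemma StronglyClose.diagDist_Dv_le {τ r a b : ℝ} (h : StronglyClose τ X X' s s')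
    (hτ : 0 ≤ τ) (hr : 0 ≤ r) (hab : a + τ ≤ b)
    (hin : ival X s a b ⊆ cthickening r (ival X s (a + τ) (b - τ)))
    (hout : ival X s (a - τ) (b + τ) ⊆ cthickening r (ival X s a b)) :
    diagDist (Dv X s (a, b)) (Dv X' s' (a, b)) ≤ ENNReal.ofReal (r + τ) := by
  refine max_le
    (h.hausdorffEDist_inter_preimage_le (I := Iic b) (Iin := Iic (b - τ)) (Iout := Iic (b + τ))
      hτ hr ?_ ?_ (sub_subset_cthickening (by linarith) hin)
      (sub_subset_cthickening (by linarith) hout))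
    (max_le
      (h.hausdorffEDist_inter_preimage_le (I := Icc a b) (Iin := Icc (a + τ) (b - τ))
        (Iout := Icc (a - τ) (b + τ)) hτ hr ?_ ?_ hin hout)
      (h.hausdorffEDist_inter_preimage_le (I := Ici a) (Iin := Ici (a + τ))
        (Iout := Ici (a - τ)) hτ hr ?_ ?_ (supl_subset_cthickening hab hin)
        (supl_subset_cthickening (by linarith) hout)))
  all_goals
    intro t ht t' htt'
    simp only [mem_Iic, mem_Icc, mem_Ici] at ht ⊢
    rw [abs_le] at htt'
    first | linarith | exact ⟨by linarith, by linarith⟩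

lemma HasCylinderStructure.mem_closure_inter_preimage {U : Set ℝ}
    {x : EuclideanSpace ℝ (Fin N)} (hcyl : HasCylinderStructure X s) (hx : x ∈ X)
    (hsx : s x ∈ Ioo 0 1) (hU : s x ∈ closure U) : x ∈ closure (X ∩ s ⁻¹' U) := by
  obtain ⟨f, hf⟩ := hcyl
  -- `g` runs along the cylinder line through `x`, with `s (g t) = t`.
  let g : Ioo (0 : ℝ) 1 → EuclideanSpace ℝ (Fin N) :=
    fun t => (f.symm ((f ⟨x, hx, hsx⟩).1, t)).1
  have hg : Continuous g :=
    continuous_subtype_val.comp (f.symm.continuous.comp (Continuous.prodMk_right _))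
  have hgx : g ⟨s x, hsx⟩ = x := by
    have : ((f ⟨x, hx, hsx⟩).1, (⟨s x, hsx⟩ : Ioo (0 : ℝ) 1)) = f ⟨x, hx, hsx⟩ :=
      Prod.ext rfl (Subtype.ext (hf ⟨x, hx, hsx⟩).symm)
    simp only [g, this, Homeomorph.symm_apply_apply]
  have hmaps : MapsTo g (Subtype.val ⁻¹' U) (X ∩ s ⁻¹' U) := fun t ht => by
    refine ⟨(f.symm _).2.1, ?_⟩
    have := hf (f.symm ((f ⟨x, hx, hsx⟩).1, t))
    rw [Homeomorph.apply_symm_apply] at this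
    rwa [mem_preimage, ← this]
  have hclosure : (⟨s x, hsx⟩ : Ioo (0 : ℝ) 1) ∈ closure (Subtype.val ⁻¹' U) := by
    rw [Topology.IsEmbedding.subtypeVal.closure_eq_preimage_closure_image,
      image_preimage_eq_inter_range, Subtype.range_coe, inter_comm]
    exact isOpen_Ioo.inter_closure ⟨hsx, hU⟩
  rw [← hgx]
  exact map_mem_closure hg hclosure hmaps

lemma eventually_ival_subset_cthickening {a b ε : ℝ} (hX : IsCompact X) (hs : Continuous s)
    (hdense : ival X s a b ⊆ closure (X ∩ s ⁻¹' Ioo a b)) (hε : 0 < ε) :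
    ∀ᶠ τ in 𝓝[>] 0, ival X s (a - τ) (b + τ) ⊆ cthickening ε (ival X s (a + τ) (b - τ)) := by
  let P : ℝ → EuclideanSpace ℝ (Fin N) → Prop := fun τ y =>
    a - τ ≤ s y → s y ≤ b + τ → y ∈ cthickening ε (ival X s (a + τ) (b - τ))
  suffices ∀ᶠ τ in 𝓝[>] 0, ∀ y ∈ X, P τ y from
    this.mono fun τ hτ y ⟨hy, h₁, h₂⟩ => hτ y hy h₁ h₂
  have hloc : ∀ x ∈ X, ∀ᶠ p in 𝓝[>] (0 : ℝ) ×ˢ 𝓝 x, P p.1 p.2 := by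
    intro x hx
    by_cases hsx : a ≤ s x ∧ s x ≤ b
    · obtain ⟨z, ⟨hzX, hza, hzb⟩, hxz⟩ := Metric.mem_closure_iff.mp (hdense ⟨hx, hsx⟩) ε hε
      have hτ : ∀ᶠ τ in 𝓝[>] (0 : ℝ), τ < s z - a ∧ τ < b - s z :=
        nhdsWithin_le_nhds
          ((eventually_lt_nhds (sub_pos.mpr hza)).and (eventually_lt_nhds (sub_pos.mpr hzb)))
      have hy : ∀ᶠ y in 𝓝 x, dist y z < ε := isOpen_ball.mem_nhds hxz
      filter_upwards [hτ.prod_mk hy] with p ⟨⟨h₁, h₂⟩, hpz⟩ _ _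
      exact mem_cthickening_of_dist_le _ z ε _ ⟨hzX, by linarith, by linarith⟩ hpz.le
    · rcases not_and_or.mp hsx with h | h
      · have hτ : ∀ᶠ τ in 𝓝[>] (0 : ℝ), τ < (a - s x) / 2 :=
          nhdsWithin_le_nhds (eventually_lt_nhds (by linarith))
        have hy : ∀ᶠ y in 𝓝 x, s y < (a + s x) / 2 :=
          (hs.tendsto x).eventually (eventually_lt_nhds (by linarith))
        filter_upwards [hτ.prod_mk hy] with p ⟨h₁, h₂⟩ h₃ _
        linarith
      · have hτ : ∀ᶠ τ in 𝓝[>] (0 : ℝ), τ < (s x - b) / 2 :=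
          nhdsWithin_le_nhds (eventually_lt_nhds (by linarith))
        have hy : ∀ᶠ y in 𝓝 x, (b + s x) / 2 < s y :=
          (hs.tendsto x).eventually (eventually_gt_nhds (by linarith))
        filter_upwards [hτ.prod_mk hy] with p ⟨h₁, h₂⟩ _ h₃
        linarith
  have hglobal : ∀ᶠ p in 𝓝[>] (0 : ℝ) ×ˢ 𝓝ˢ X, P p.1 p.2 := hX.mem_prod_nhdsSet_of_forall hloc
  exact hglobal.curry.mono fun _ h => h.self_of_nhdsSet

lemma exists_forall_stronglyClose_diagDist_le {v₁ v₂ ε : ℝ} (hX : IsCompact X)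
    (hs : Continuous s) (hcyl : HasCylinderStructure X s) (hv : (v₁, v₂) ∈ Omega)
    (hε : 0 < ε) :
    ∃ τ > 0, ∀ (X' : Set (EuclideanSpace ℝ (Fin N))) (s' : EuclideanSpace ℝ (Fin N) → ℝ),
      StronglyClose τ X X' s s' → diagDist (Dv X s (v₁, v₂)) (Dv X' s' (v₁, v₂)) ≤
        ENNReal.ofReal ε := by
  obtain ⟨hv₁, hv₁₂, hv₂⟩ := hv
  have hdense : ival X s v₁ v₂ ⊆ closure (X ∩ s ⁻¹' Ioo v₁ v₂) :=
    fun x ⟨hx, h₁, h₂⟩ => hcyl.mem_closure_inter_preimage hx ⟨by linarith, by linarith⟩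
      (by rw [closure_Ioo hv₁₂.ne]; exact ⟨h₁, h₂⟩)
  have hsmall : ∀ᶠ τ in 𝓝[>] (0 : ℝ), 0 < τ ∧ τ < ε / 2 ∧ τ < v₂ - v₁ :=
    eventually_mem_nhdsWithin.and (nhdsWithin_le_nhds
      ((eventually_lt_nhds (half_pos hε)).and (eventually_lt_nhds (by linarith))))
  obtain ⟨τ, hpush, hτ, hτε, hτv⟩ :=
    ((eventually_ival_subset_cthickening hX hs hdense (half_pos hε)).and hsmall).exists
  refine ⟨τ, hτ, fun X' s' hc => ?_⟩
  calc _ ≤ ENNReal.ofReal (ε / 2 + τ) :=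
        hc.diagDist_Dv_le hτ.le (half_pos hε).le (by linarith)
          ((ival_subset_ival (by linarith) (by linarith)).trans hpush)
          (hpush.trans (cthickening_subset_of_subset _
            (ival_subset_ival (by linarith) (by linarith))))
    _ ≤ ENNReal.ofReal ε := ENNReal.ofReal_le_ofReal (by linarith)

lemma StronglyClose.diagDist_Dv_le_of_lipschitz {v₁ v₂ K ρ τ : ℝ}
    (h : StronglyClose τ X X' s s') (hK : 0 ≤ K) (hτ : 0 < τ) (hτρ : τ < ρ)
    (hτv : 2 * τ ≤ v₂ - v₁)
    (hLip : ∀ a ∈ Ioo (v₁ - ρ) (v₁ + ρ), ∀ a' ∈ Ioo (v₁ - ρ) (v₁ + ρ),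
      ∀ b ∈ Ioo (v₂ - ρ) (v₂ + ρ), ∀ b' ∈ Ioo (v₂ - ρ) (v₂ + ρ), a ≤ b → a' ≤ b' →
        hausdorffEDist (ival X s a b) (ival X s a' b') ≤
          ENNReal.ofReal (K * max |a - a'| |b - b'|)) :
    diagDist (Dv X s (v₁, v₂)) (Dv X' s' (v₁, v₂)) ≤ ENNReal.ofReal ((K + 1) * τ) := by
  have hin := subset_cthickening_of_hausdorffEDist_le
    (hLip v₁ ⟨by linarith, by linarith⟩ (v₁ + τ) ⟨by linarith, by linarith⟩
      v₂ ⟨by linarith, by linarith⟩ (v₂ - τ) ⟨by linarith, by linarith⟩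
      (by linarith) (by linarith))
  have hout := subset_cthickening_of_hausdorffEDist_le
    (hLip (v₁ - τ) ⟨by linarith, by linarith⟩ v₁ ⟨by linarith, by linarith⟩
      (v₂ + τ) ⟨by linarith, by linarith⟩ v₂ ⟨by linarith, by linarith⟩
      (by linarith) (by linarith))
  simp only [sub_add_cancel_left, sub_sub_cancel, sub_sub_cancel_left, add_sub_cancel_left,
    abs_neg, abs_of_pos hτ, max_self] at hin hout
  calc _ ≤ ENNReal.ofReal (K * τ + τ) :=
        h.diagDist_Dv_le hτ.le (by positivity) (by linarith) hin hout
    _ = ENNReal.ofReal ((K + 1) * τ) := by rw [add_one_mul]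

end LevelSets

lemma lipschitzWith_inducedStrat (Sg : Set (EuclideanSpace ℝ (Fin N))) :
    LipschitzWith 1 (inducedStrat Sg) :=
  (lipschitz_infDist_pt Sg).min_const 1

lemma abs_inducedStrat_sub_le_hausdorffDist {Sg Sg' : Set (EuclideanSpace ℝ (Fin N))}
    (h : hausdorffEDist Sg Sg' ≠ ⊤) (x : EuclideanSpace ℝ (Fin N)) :
    |inducedStrat Sg x - inducedStrat Sg' x| ≤ hausdorffDist Sg Sg' := by
  have h₁ := infDist_le_infDist_add_hausdorffDist (x := x) h
  have h₂ := infDist_le_infDist_add_hausdorffDist (x := x)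
    (by rwa [hausdorffEDist_comm] : hausdorffEDist Sg' Sg ≠ ⊤)
  rw [hausdorffDist_comm] at h₂
  calc |inducedStrat Sg x - inducedStrat Sg' x|
      ≤ max |infDist x Sg - infDist x Sg'| |1 - 1| := abs_min_sub_min_le_max _ _ _ _
    _ ≤ hausdorffDist Sg Sg' :=
      max_le (abs_sub_le_iff.mpr ⟨by linarith, by linarith⟩) (by simp [hausdorffDist_nonneg])

lemma stronglyClose_inducedStrat {X X' Sg Sg' : Set (EuclideanSpace ℝ (Fin N))} {δ : ℝ}
    (hX : hausdorffEDist X X' < ENNReal.ofReal δ)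
    (hS : hausdorffEDist Sg Sg' < ENNReal.ofReal δ) :
    StronglyClose (2 * δ) X X' (inducedStrat Sg) (inducedStrat Sg') := by
  have hδ : 0 < δ := ENNReal.ofReal_pos.mp (pos_of_gt hS)
  have exists_partner : ∀ {Y Y' T T' : Set (EuclideanSpace ℝ (Fin N))},
      hausdorffEDist Y Y' < ENNReal.ofReal δ → hausdorffEDist T T' < ENNReal.ofReal δ →
      ∀ x ∈ Y, ∃ y ∈ Y', ‖x - y‖ ≤ 2 * δ ∧ |inducedStrat T x - inducedStrat T' y| ≤ 2 * δ := by
    intro Y Y' T T' hY hT x hx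
    obtain ⟨y, hy, hxy⟩ := exists_edist_lt_of_hausdorffEDist_lt hx hY
    rw [edist_lt_ofReal] at hxy
    have hTT' : hausdorffDist T T' ≤ δ := ENNReal.toReal_le_of_le_ofReal hδ.le hT.le
    refine ⟨y, hy, by rw [← dist_eq_norm]; linarith, ?_⟩
    calc |inducedStrat T x - inducedStrat T' y|
        ≤ |inducedStrat T x - inducedStrat T y| + |inducedStrat T y - inducedStrat T' y| :=
          abs_sub_le _ _ _
      _ ≤ dist x y + hausdorffDist T T' := by
          gcongr
          · simpa [Real.dist_eq] using (lipschitzWith_inducedStrat T).dist_le_mul x y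
          · exact abs_inducedStrat_sub_le_hausdorffDist hT.ne_top y
      _ ≤ 2 * δ := by linarith
  refine ⟨exists_partner hX hS, fun y hy => ?_⟩
  obtain ⟨x, hx, hxy, hs⟩ :=
    exists_partner (by rwa [hausdorffEDist_comm]) (by rwa [hausdorffEDist_comm]) y hy
  exact ⟨x, hx, by rwa [norm_sub_rev], by rwa [abs_sub_comm]⟩

theorem persistent_stratified_continuous_and_lipschitz_general {N : ℕ}
    (X Sg : Set (EuclideanSpace ℝ (Fin N)))
    (hX : IsCompact X)
    (hcyl : HasCylinderStructure X (inducedStrat Sg))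
    (v₁ v₂ : ℝ) (hv : (v₁, v₂) ∈ Omega) :
    (∀ ε : ℝ, 0 < ε → ∃ δ : ℝ, 0 < δ ∧
      ∀ X' Sg' : Set (EuclideanSpace ℝ (Fin N)),
        Sg' ⊆ X' → Sg'.Nonempty →
        EMetric.hausdorffEdist X X' < ENNReal.ofReal δ →
        EMetric.hausdorffEdist Sg Sg' < ENNReal.ofReal δ →
        diagDist (Dv X (inducedStrat Sg) (v₁, v₂))
            (Dv X' (inducedStrat Sg') (v₁, v₂)) ≤ ENNReal.ofReal ε) ∧
    (∀ K : ℝ, 0 ≤ K → ∀ ρ : ℝ, 0 < ρ →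
      (∀ a ∈ Set.Ioo (v₁ - ρ) (v₁ + ρ), ∀ a' ∈ Set.Ioo (v₁ - ρ) (v₁ + ρ),
       ∀ b ∈ Set.Ioo (v₂ - ρ) (v₂ + ρ), ∀ b' ∈ Set.Ioo (v₂ - ρ) (v₂ + ρ),
        a ≤ b → a' ≤ b' →
        EMetric.hausdorffEdist (ival X (inducedStrat Sg) a b)
            (ival X (inducedStrat Sg) a' b') ≤
          ENNReal.ofReal (K * max |a - a'| |b - b'|)) →
      ∃ δ₀ : ℝ, 0 < δ₀ ∧ ∀ δ : ℝ, 0 < δ → δ ≤ δ₀ →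
        ∀ X' Sg' : Set (EuclideanSpace ℝ (Fin N)),
          Sg' ⊆ X' → Sg'.Nonempty →
          EMetric.hausdorffEdist X X' < ENNReal.ofReal δ →
          EMetric.hausdorffEdist Sg Sg' < ENNReal.ofReal δ →
          diagDist (Dv X (inducedStrat Sg) (v₁, v₂))
              (Dv X' (inducedStrat Sg') (v₁, v₂)) ≤
            ENNReal.ofReal (2 * (K + 1) * δ)) := by
  refine ⟨fun ε hε => ?_, fun K hK ρ hρ hLip => ?_⟩
  · obtain ⟨τ, hτ, hdiag⟩ := exists_forall_stronglyClose_diagDist_le hX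
      (lipschitzWith_inducedStrat Sg).continuous hcyl hv hε
    refine ⟨τ / 2, half_pos hτ, fun X' Sg' _ _ hXX' hSS' => hdiag X' _ ?_⟩
    simpa only [mul_div_cancel₀ τ two_ne_zero] using stronglyClose_inducedStrat hXX' hSS'
  · obtain ⟨-, hv₁₂, -⟩ := hv
    refine ⟨min (ρ / 4) ((v₂ - v₁) / 4), lt_min (by linarith) (by linarith),
      fun δ hδ hδ₀ X' Sg' _ _ hXX' hSS' => ?_⟩
    have hδρ : δ ≤ ρ / 4 := hδ₀.trans (min_le_left _ _)
    have hδv : δ ≤ (v₂ - v₁) / 4 := hδ₀.trans (min_le_right _ _)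
    calc _ ≤ ENNReal.ofReal ((K + 1) * (2 * δ)) :=
          (stronglyClose_inducedStrat hXX' hSS').diagDist_Dv_le_of_lipschitz hK (by positivity)
            (by linarith) (by linarith) hLip
      _ = ENNReal.ofReal (2 * (K + 1) * δ) := by ring_nf

/-- Diagram-level continuity and Lipschitz continuity of the persistent stratified
homotopy type `ε_P^v` at a compact cylindrically stratified sample. -/
theorem persistent_stratified_continuous_and_lipschitz {N : ℕ}
    (X Sg : Set (EuclideanSpace ℝ (Fin N)))
    (hSX : Sg ⊆ X) (hne : Sg.Nonempty) (hX : IsCompact X)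
    (hcyl : HasCylinderStructure X (inducedStrat Sg))
    (v₁ v₂ : ℝ) (hv : (v₁, v₂) ∈ Omega) :
    (∀ ε : ℝ, 0 < ε → ∃ δ : ℝ, 0 < δ ∧
      ∀ X' Sg' : Set (EuclideanSpace ℝ (Fin N)),
        Sg' ⊆ X' → Sg'.Nonempty →
        EMetric.hausdorffEdist X X' < ENNReal.ofReal δ →
        EMetric.hausdorffEdist Sg Sg' < ENNReal.ofReal δ →
        diagDist (Dv X (inducedStrat Sg) (v₁, v₂))
            (Dv X' (inducedStrat Sg') (v₁, v₂)) ≤ ENNReal.ofReal ε) ∧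
    (∀ K : ℝ, 0 ≤ K → ∀ ρ : ℝ, 0 < ρ →
      (∀ a ∈ Set.Ioo (v₁ - ρ) (v₁ + ρ), ∀ a' ∈ Set.Ioo (v₁ - ρ) (v₁ + ρ),
       ∀ b ∈ Set.Ioo (v₂ - ρ) (v₂ + ρ), ∀ b' ∈ Set.Ioo (v₂ - ρ) (v₂ + ρ),
        a ≤ b → a' ≤ b' →
        EMetric.hausdorffEdist (ival X (inducedStrat Sg) a b)
            (ival X (inducedStrat Sg) a' b') ≤
          ENNReal.ofReal (K * max |a - a'| |b - b'|)) →
      ∃ δ₀ : ℝ, 0 < δ₀ ∧ ∀ δ : ℝ, 0 < δ → δ ≤ δ₀ →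
        ∀ X' Sg' : Set (EuclideanSpace ℝ (Fin N)),
          Sg' ⊆ X' → Sg'.Nonempty →
          EMetric.hausdorffEdist X X' < ENNReal.ofReal δ →
          EMetric.hausdorffEdist Sg Sg' < ENNReal.ofReal δ →
          diagDist (Dv X (inducedStrat Sg) (v₁, v₂))
              (Dv X' (inducedStrat Sg') (v₁, v₂)) ≤
            ENNReal.ofReal (2 * (K + 1) * δ)) :=
  persistent_stratified_continuous_and_lipschitz_general X Sg hX hcyl v₁ v₂ hv

end Stmt12
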